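/- arXiv:math/0206129 — 2 statements merged into one kernel-verified Lean document; each statement's English description precedes it below -/
import Mathlib

section
/- Let R be an algebraic curvature tensor on a vector space V with nondegenerate symmetric bilinear form, and let π be a nondegenerate k-dimensional subspace. Then the higher order Jacobi operator J(π) := Σᵢ εᵢ J(eᵢ), where {e₁,...,e_k} is an orthonormal basis of π with εᵢ = ⟨eᵢ,eᵢ⟩ = ±1, is independent of the choice of orthonormal basis of π. -/
/-!
Each `v ∈ π` expands as `v = ∑ εᵢ B(eᵢ, v) eᵢ`. So for any bilinear `T`, expanding the second
slot of `∑ εᵢ T(eᵢ, eᵢ)` in the `f`-basis and exchanging the sums, the symmetry of `B` makes the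
first slot recombine into the `e`-expansion of `fⱼ`, which leaves `∑ δⱼ T(fⱼ, fⱼ)`. With
`T(a, b) = R(y, a, b, z)` this sum is `B(J(π) y, z)`, and `B` is nondegenerate.
-/

open Submodule

theorem update_vec4_one {V : Type*} (y a b z x : V) :
    Function.update ![y, a, b, z] 1 x = ![y, x, b, z] := by
  ext i; fin_cases i <;> rfl

theorem update_vec4_two {V : Type*} (y a b z x : V) :
    Function.update ![y, a, b, z] 2 x = ![y, a, x, z] := by
  ext i; fin_cases i <;> rfl

namespace MultilinearMap

variable {K V : Type*} [CommSemiring K] [AddCommMonoid V] [Module K V]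

noncomputable def bilinMiddle (R : MultilinearMap K (fun _ : Fin 4 => V) K) (y z : V) :
    V →ₗ[K] V →ₗ[K] K :=
  LinearMap.mk₂ K (fun a b => R ![y, a, b, z])
    (fun a a' b => by
      simpa [update_vec4_one] using R.map_update_add ![y, a, b, z] 1 a a')
    (fun c a b => by
      simpa [update_vec4_one] using R.map_update_smul ![y, a, b, z] 1 c a)
    (fun a b b' => by
      simpa [update_vec4_two] using R.map_update_add ![y, a, b, z] 2 b b')
    (fun c a b => by
      simpa [update_vec4_two] using R.map_update_smul ![y, a, b, z] 2 c b)

@[simp]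
theorem bilinMiddle_apply (R : MultilinearMap K (fun _ : Fin 4 => V) K) (y z a b : V) :
    bilinMiddle R y z a b = R ![y, a, b, z] :=
  rfl

end MultilinearMap

section Orthonormal

variable {K M ι κ : Type*} [CommRing K] [AddCommGroup M] [Module K M]
  [Fintype ι] [DecidableEq ι] [Fintype κ] [DecidableEq κ]

theorem sum_smul_eq_of_mem_span_orthonormal (B : M →ₗ[K] M →ₗ[K] K) {e : ι → M} {ε : ι → K}
    (hε : ∀ i, ε i * ε i = 1) (he : ∀ i j, B (e i) (e j) = if i = j then ε i else 0)
    {v : M} (hv : v ∈ span K (Set.range e)) :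
    ∑ i, (ε i * B (e i) v) • e i = v := by
  obtain ⟨a, rfl⟩ := (mem_span_range_iff_exists_fun K).mp hv
  refine Finset.sum_congr rfl fun i _ => ?_
  have hcoeff : ε i * B (e i) (∑ l, a l • e l) = a i := by
    simp only [map_sum, map_smul, he, smul_eq_mul, mul_ite, mul_zero, Finset.sum_ite_eq,
      Finset.mem_univ, if_true]
    linear_combination a i * hε i
  rw [hcoeff]

theorem sum_bilin_diag_eq_of_orthonormal (B T : M →ₗ[K] M →ₗ[K] K)
    (hB : ∀ x y, B x y = B y x) {e : ι → M} {f : κ → M} {ε : ι → K} {δ : κ → K}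
    (hε : ∀ i, ε i * ε i = 1) (hδ : ∀ j, δ j * δ j = 1)
    (he : ∀ i j, B (e i) (e j) = if i = j then ε i else 0)
    (hf : ∀ i j, B (f i) (f j) = if i = j then δ i else 0)
    (hspan : span K (Set.range e) = span K (Set.range f)) :
    ∑ i, ε i * T (e i) (e i) = ∑ j, δ j * T (f j) (f j) := by
  have he_exp : ∀ i, ∑ j, (δ j * B (f j) (e i)) • f j = e i := fun i =>
    sum_smul_eq_of_mem_span_orthonormal B hδ hf (hspan ▸ subset_span ⟨i, rfl⟩)
  have hf_exp : ∀ j, ∑ i, (ε i * B (e i) (f j)) • e i = f j := fun j =>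
    sum_smul_eq_of_mem_span_orthonormal B hε he (hspan ▸ subset_span ⟨j, rfl⟩)
  calc ∑ i, ε i * T (e i) (e i)
      = ∑ i, ε i * T (e i) (∑ j, (δ j * B (f j) (e i)) • f j) := by simp only [he_exp]
    _ = ∑ j, δ j * T (∑ i, (ε i * B (e i) (f j)) • e i) (f j) := by
        simp only [map_sum, map_smul, LinearMap.sum_apply, LinearMap.smul_apply, smul_eq_mul,
          Finset.mul_sum]
        rw [Finset.sum_comm]
        refine Finset.sum_congr rfl fun j _ => Finset.sum_congr rfl fun i _ => ?_
        rw [hB (f j) (e i)]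
        ring
    _ = ∑ j, δ j * T (f j) (f j) := by simp only [hf_exp]

end Orthonormal

theorem higher_jacobi_well_defined_general {V : Type*} [AddCommGroup V] [Module ℝ V]
    (B : V →ₗ[ℝ] V →ₗ[ℝ] ℝ)
    (hBsymm : ∀ x y, B x y = B y x)
    (hBnd : ∀ x, (∀ y, B x y = 0) → x = 0)
    (R : MultilinearMap ℝ (fun _ : Fin 4 => V) ℝ)
    (Jac : V → V → V)
    (hJac : ∀ x y z, B (Jac x y) z = R ![y, x, x, z])
    (π : Submodule ℝ V) (k : ℕ)
    (e f : Fin k → V) (ε δ : Fin k → ℝ)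
    (hε : ∀ i, ε i = 1 ∨ ε i = -1)
    (hδ : ∀ i, δ i = 1 ∨ δ i = -1)
    (he : ∀ i j, B (e i) (e j) = if i = j then ε i else 0)
    (hf : ∀ i j, B (f i) (f j) = if i = j then δ i else 0)
    (hespan : Submodule.span ℝ (Set.range e) = π)
    (hfspan : Submodule.span ℝ (Set.range f) = π) :
    ∀ y, ∑ i, ε i • Jac (e i) y = ∑ i, δ i • Jac (f i) y := by
  intro y
  refine sub_eq_zero.mp (hBnd _ fun z => ?_)
  have htrace := sum_bilin_diag_eq_of_orthonormal B (R.bilinMiddle y z) hBsymm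
    (fun i => mul_self_eq_one_iff.mpr (hε i)) (fun i => mul_self_eq_one_iff.mpr (hδ i))
    he hf (hespan.trans hfspan.symm)
  simp only [MultilinearMap.bilinMiddle_apply] at htrace
  simp only [map_sub, map_sum, map_smul, LinearMap.sub_apply, LinearMap.sum_apply,
    LinearMap.smul_apply, smul_eq_mul, hJac, htrace, sub_self]

/-- the higher order Jacobi operator
`J(π) = ∑ᵢ εᵢ J(eᵢ)` is independent of the chosen orthonormal basis of the
nondegenerate subspace `π`. -/
theorem higher_jacobi_well_defined {V : Type*} [AddCommGroup V] [Module ℝ V]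
    [FiniteDimensional ℝ V]
    (B : V →ₗ[ℝ] V →ₗ[ℝ] ℝ)
    (hBsymm : ∀ x y, B x y = B y x)
    (hBnd : ∀ x, (∀ y, B x y = 0) → x = 0)
    (R : MultilinearMap ℝ (fun _ : Fin 4 => V) ℝ)
    (hR1 : ∀ x y z w, R ![x, y, z, w] = - R ![y, x, z, w])
    (hR2 : ∀ x y z w, R ![x, y, z, w] = R ![z, w, x, y])
    (hR3 : ∀ x y z w, R ![x, y, z, w] + R ![y, z, x, w] + R ![z, x, y, w] = 0)
    (Jac : V → V → V)
    (hJac : ∀ x y z, B (Jac x y) z = R ![y, x, x, z])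
    (π : Submodule ℝ V) (k : ℕ)
    (e f : Fin k → V) (ε δ : Fin k → ℝ)
    (hε : ∀ i, ε i = 1 ∨ ε i = -1)
    (hδ : ∀ i, δ i = 1 ∨ δ i = -1)
    (he : ∀ i j, B (e i) (e j) = if i = j then ε i else 0)
    (hf : ∀ i j, B (f i) (f j) = if i = j then δ i else 0)
    (hespan : Submodule.span ℝ (Set.range e) = π)
    (hfspan : Submodule.span ℝ (Set.range f) = π) :
    ∀ y, ∑ i, ε i • Jac (e i) y = ∑ i, δ i • Jac (f i) y :=
  higher_jacobi_well_defined_general B hBsymm hBnd R Jac hJac π k e f ε δ hε hδ he hf hespan hfspan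
end

section
/- Let Φ be a skew-adjoint endomorphism of V with Φ² = 0 (so Φ is 2-step nilpotent), and let R_Φ(x,y)z := ⟨y,Φz⟩Φx - ⟨x,Φz⟩Φy - 2⟨x,Φy⟩Φz be the associated curvature operator. Then R_Φ is 2-nilpotent: R_Φ(x₁,x₂)∘R_Φ(x₃,x₄) = 0 for all vectors x₁,x₂,x₃,x₄. In particular, every Jacobi operator J(x) = R_Φ(·,x)x satisfies J(x)² = 0. -/
/-- for a skew-adjoint `Φ` with `Φ² = 0`, the curvature
operator `R_Φ(x,y)z = ⟨y,Φz⟩Φx - ⟨x,Φz⟩Φy - 2⟨x,Φy⟩Φz` is 2-nilpotent;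
in particular every Jacobi operator satisfies `J(x)² = 0`. -/
theorem RPhi_two_nilpotent {V : Type*} [AddCommGroup V] [Module ℝ V]
    [FiniteDimensional ℝ V]
    (B : V →ₗ[ℝ] V →ₗ[ℝ] ℝ)
    (hBsymm : ∀ x y, B x y = B y x)
    (hBnd : ∀ x, (∀ y, B x y = 0) → x = 0)
    (Φ : V →ₗ[ℝ] V)
    (hΦskew : ∀ x y, B (Φ x) y = - B x (Φ y))
    (hΦ2 : ∀ v, Φ (Φ v) = 0)
    (RΦ : V → V → V → V)
    (hRΦ : ∀ x y z,
      RΦ x y z = B y (Φ z) • Φ x - B x (Φ z) • Φ y - (2 * B x (Φ y)) • Φ z) :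
    (∀ x₁ x₂ x₃ x₄ z, RΦ x₁ x₂ (RΦ x₃ x₄ z) = 0) ∧
    (∀ x y, RΦ (RΦ y x x) x x = 0) := by
  -- Φ kills any value of RΦ
  have hΦR : ∀ a b c, Φ (RΦ a b c) = 0 := by
    intro a b c
    rw [hRΦ]
    simp [map_sub, map_smul, hΦ2]
  -- B of a Φ-image against a value of RΦ vanishes
  have hBR : ∀ a b c u, B u (Φ (RΦ a b c)) = 0 := by
    intro a b c u
    rw [hΦR]
    simp
  have hBR' : ∀ a b c u, B (RΦ a b c) (Φ u) = 0 := by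
    intro a b c u
    rw [hRΦ]
    have h : ∀ v w, B (Φ v) (Φ w) = 0 := by
      intro v w
      rw [hΦskew, hΦ2]
      simp
    simp [map_sub, map_smul, LinearMap.sub_apply, LinearMap.smul_apply, h]
  refine ⟨fun x₁ x₂ x₃ x₄ z => ?_, fun x y => ?_⟩
  · rw [hRΦ x₁ x₂, hBR, hBR, hΦR]
    simp
  · rw [hRΦ _ x x, hBR', hΦR]
    simp
end
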